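/- arXiv:2602.03298 — 3 statements merged into one kernel-verified Lean document; each statement's English description precedes it below -/
import Mathlib

section
/- Let H be a collection of nonempty graphs (subsets of the set of 2-element subsets of [n]) closed under the relevant isomorphism notion, and define δ_n(H) as the maximal density |G|/2^{C(n,2)} over all families G of graphs on [n] such that for all G_1, G_2 ∈ G the symmetric difference G_1 Δ G_2 is not isomorphic to any graph in H. Then the sequence (δ_n(H))_{n ≥ 2} is non-increasing: for all n > m ≥ 2, δ_n(H) ≤ δ_m(H). -/
open Finset

/-- An abstract graph: a finite set of edges, each edge a finite set of natural numbers. -/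
abbrev AGraph := Finset (Finset ℕ)

/-- `G` is a (loopless) graph on `[n]`: every edge has two elements, within `{0, …, n-1}`. -/
def IsGraphOn (n : ℕ) (G : AGraph) : Prop := ∀ e ∈ G, e.card = 2 ∧ e ⊆ Finset.range n

/-- Graph isomorphism: a bijection of vertices mapping the edge set of `G` onto that of `H`. -/
def GIsom (G H : AGraph) : Prop := ∃ σ : ℕ ≃ ℕ, G.image (Finset.image σ) = H

/-- `𝒢` is an `ℋ`-code: no symmetric difference of two members of `𝒢` is isomorphic to a
member of `ℋ`. -/
def IsHCode (ℋ : Set AGraph) (𝒢 : Finset AGraph) : Prop :=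
  ∀ G₁ ∈ 𝒢, ∀ G₂ ∈ 𝒢, ∀ W ∈ ℋ, ¬ GIsom (symmDiff G₁ G₂) W

/-- `δ_n(ℋ)`: the maximal density of an `ℋ`-code consisting of graphs on `[n]`. -/
noncomputable def deltaH (ℋ : Set AGraph) (n : ℕ) : ℝ :=
  sSup {d : ℝ | ∃ 𝒢 : Finset AGraph, (∀ G ∈ 𝒢, IsGraphOn n G) ∧ IsHCode ℋ 𝒢 ∧
    d = (𝒢.card : ℝ) / 2 ^ n.choose 2}

/-- The edge set of the complete graph on `[n]`. -/
def Edg (n : ℕ) : Finset (Finset ℕ) := Finset.powersetCard 2 (Finset.range n)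

lemma card_Edg (n : ℕ) : (Edg n).card = n.choose 2 := by
  simp [Edg, Finset.card_powersetCard]

lemma isGraphOn_iff {n : ℕ} {G : AGraph} : IsGraphOn n G ↔ G ⊆ Edg n := by
  simp only [IsGraphOn, Edg, Finset.subset_iff, Finset.mem_powersetCard]
  exact forall₂_congr fun e _ => and_comm

lemma deltaH_set_nonempty (ℋ : Set AGraph) (n : ℕ) :
    {d : ℝ | ∃ 𝒢 : Finset AGraph, (∀ G ∈ 𝒢, IsGraphOn n G) ∧ IsHCode ℋ 𝒢 ∧
      d = (𝒢.card : ℝ) / 2 ^ n.choose 2}.Nonempty :=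
  ⟨0, ∅, by simp, by simp [IsHCode], by simp⟩

lemma deltaH_set_bddAbove (ℋ : Set AGraph) (n : ℕ) :
    BddAbove {d : ℝ | ∃ 𝒢 : Finset AGraph, (∀ G ∈ 𝒢, IsGraphOn n G) ∧ IsHCode ℋ 𝒢 ∧
      d = (𝒢.card : ℝ) / 2 ^ n.choose 2} := by
  refine ⟨1, ?_⟩
  rintro d ⟨𝒢, hon, -, rfl⟩
  have hsub : 𝒢 ⊆ (Edg n).powerset := fun G hG =>
    Finset.mem_powerset.2 (isGraphOn_iff.1 (hon G hG))
  have hcard : 𝒢.card ≤ 2 ^ n.choose 2 := by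
    calc 𝒢.card ≤ (Edg n).powerset.card := Finset.card_le_card hsub
    _ = 2 ^ n.choose 2 := by rw [Finset.card_powerset, card_Edg]
  rw [div_le_one (by positivity)]
  exact_mod_cast hcard

lemma deltaH_nonneg (ℋ : Set AGraph) (n : ℕ) : 0 ≤ deltaH ℋ n :=
  le_csSup (deltaH_set_bddAbove ℋ n) ⟨∅, by simp, by simp [IsHCode], by simp⟩

lemma card_le_deltaH (ℋ : Set AGraph) (n : ℕ) (𝒢 : Finset AGraph)
    (hon : ∀ G ∈ 𝒢, IsGraphOn n G) (hcode : IsHCode ℋ 𝒢) :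
    (𝒢.card : ℝ) ≤ deltaH ℋ n * 2 ^ n.choose 2 := by
  have h : (𝒢.card : ℝ) / 2 ^ n.choose 2 ≤ deltaH ℋ n :=
    le_csSup (deltaH_set_bddAbove ℋ n) ⟨𝒢, hon, hcode, rfl⟩
  rwa [div_le_iff₀ (by positivity)] at h

lemma symmDiff_inter_of_sdiff_eq {G₁ G₂ S : AGraph} (h : G₁ \ S = G₂ \ S) :
    symmDiff (G₁ ∩ S) (G₂ ∩ S) = symmDiff G₁ G₂ := by
  ext a
  have h' := Finset.ext_iff.mp h a
  simp only [Finset.mem_sdiff] at h'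
  simp only [Finset.mem_symmDiff, Finset.mem_inter]
  tauto

/-- The sequence `(δ_n(ℋ))_{n ≥ 2}` is non-increasing. -/
theorem stmt5 (ℋ : Set AGraph)
    (hne : ∀ W ∈ ℋ, W ≠ ∅)
    (hiso : ∀ G W, GIsom G W → (G ∈ ℋ ↔ W ∈ ℋ))
    {n m : ℕ} (hm : 2 ≤ m) (hnm : m < n) :
    deltaH ℋ n ≤ deltaH ℋ m := by
  have hmn : m ≤ n := hnm.le
  have hcc : m.choose 2 ≤ n.choose 2 := Nat.choose_le_choose 2 hmn
  apply csSup_le (deltaH_set_nonempty ℋ n)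
  rintro d ⟨𝒢, hon, hcode, rfl⟩
  rw [div_le_iff₀ (by positivity)]
  set S := Edg m with hS
  -- fiber decomposition along G ↦ G \ S
  have hsplit : 𝒢.card = ∑ r ∈ 𝒢.image (· \ S), (𝒢.filter fun G => G \ S = r).card :=
    Finset.card_eq_sum_card_image (· \ S) 𝒢
  -- each fiber has card at most δ_m * 2^(C(m,2))
  have hfiber : ∀ r ∈ 𝒢.image (· \ S),
      ((𝒢.filter fun G => G \ S = r).card : ℝ) ≤ deltaH ℋ m * 2 ^ m.choose 2 := by
    intro r _
    set F := 𝒢.filter fun G => G \ S = r with hF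
    have hinj : Set.InjOn (· ∩ S) F := by
      intro G₁ h₁ G₂ h₂ h12
      have e₁ : G₁ \ S = r := (Finset.mem_filter.1 h₁).2
      have e₂ : G₂ \ S = r := (Finset.mem_filter.1 h₂).2
      ext a
      have h1 := Finset.ext_iff.mp h12 a
      have h2 := Finset.ext_iff.mp (e₁.trans e₂.symm) a
      simp only [Finset.mem_inter, Finset.mem_sdiff] at h1 h2
      tauto
    have hcardF : F.card = (F.image (· ∩ S)).card :=
      (Finset.card_image_of_injOn hinj).symm
    rw [hcardF]
    apply card_le_deltaH
    · intro G hG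
      rw [Finset.mem_image] at hG
      obtain ⟨G', hG', rfl⟩ := hG
      exact isGraphOn_iff.2 fun e he => (Finset.mem_inter.1 he).2
    · intro G₁ h₁ G₂ h₂ W hW
      rw [Finset.mem_image] at h₁ h₂
      obtain ⟨G₁', hG₁', rfl⟩ := h₁
      obtain ⟨G₂', hG₂', rfl⟩ := h₂
      have e₁ : G₁' \ S = r := (Finset.mem_filter.1 hG₁').2
      have e₂ : G₂' \ S = r := (Finset.mem_filter.1 hG₂').2
      rw [symmDiff_inter_of_sdiff_eq (e₁.trans e₂.symm)]
      exact hcode G₁' (Finset.mem_filter.1 hG₁').1 G₂' (Finset.mem_filter.1 hG₂').1 W hW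
  -- count the fibers
  have himg : 𝒢.image (· \ S) ⊆ (Edg n \ S).powerset := by
    intro r hr
    rw [Finset.mem_image] at hr
    obtain ⟨G, hG, rfl⟩ := hr
    refine Finset.mem_powerset.2 fun e he => ?_
    rw [Finset.mem_sdiff] at he ⊢
    exact ⟨isGraphOn_iff.1 (hon G hG) he.1, he.2⟩
  have hSsub : S ⊆ Edg n := Finset.powersetCard_mono (Finset.range_subset_range.2 hmn)
  have hcount : (𝒢.image (· \ S)).card ≤ 2 ^ (n.choose 2 - m.choose 2) := by
    calc (𝒢.image (· \ S)).card ≤ (Edg n \ S).powerset.card := Finset.card_le_card himg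
    _ = 2 ^ (n.choose 2 - m.choose 2) := by
        rw [Finset.card_powerset, Finset.card_sdiff_of_subset hSsub, card_Edg, hS, card_Edg]
  have hB : (0:ℝ) ≤ deltaH ℋ m * 2 ^ m.choose 2 := by
    have := deltaH_nonneg ℋ m; positivity
  calc (𝒢.card : ℝ)
      = ∑ r ∈ 𝒢.image (· \ S), ((𝒢.filter fun G => G \ S = r).card : ℝ) := by
        rw [hsplit]; push_cast; ring
    _ ≤ ∑ _r ∈ 𝒢.image (· \ S), (deltaH ℋ m * 2 ^ m.choose 2) :=
        Finset.sum_le_sum hfiber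
    _ = (𝒢.image (· \ S)).card * (deltaH ℋ m * 2 ^ m.choose 2) := by
        rw [Finset.sum_const, nsmul_eq_mul]
    _ ≤ (2 : ℝ) ^ (n.choose 2 - m.choose 2) * (deltaH ℋ m * 2 ^ m.choose 2) := by
        apply mul_le_mul_of_nonneg_right _ hB
        exact_mod_cast hcount
    _ = deltaH ℋ m * 2 ^ n.choose 2 := by
        rw [mul_comm, mul_assoc, ← pow_add, Nat.add_sub_cancel' hcc]
end

section
/- Let d ≥ 0, let I be a nonempty finite set, and suppose P : F_2^I → ℝ/ℤ has the form P(x) = α + Σ_{S ∈ C(I, ≤d)} λ_S · Π_{i∈S} x(i) mod 1, where α ∈ ℝ/ℤ, the sum is over nonempty subsets S of I with |S| ≤ d, each λ_S is of the form j/2^{d−|S|+1} with j an integer, and x(i) ∈ {0,1} ⊆ ℝ. Then for all h_1, …, h_{d+1}, x ∈ F_2^I, the iterated discrete derivative Δ_{h_1}⋯Δ_{h_{d+1}} P(x) = 0, where Δ_h P(x) = P(x+h) − P(x). -/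
open Finset

variable {I : Type*}

/-- The discrete derivative of `P : G → ℝ/ℤ` in the direction `h`. -/
noncomputable def discDeriv {G : Type*} [AddCommGroup G] (h : G) (P : G → AddCircle (1 : ℝ)) :
    G → AddCircle (1 : ℝ) := fun x => P (x + h) - P x

/-!
Writing `2 a = 1 - (-1) ^ a` for `a ∈ {0, 1}` expands `2 ^ |S| * ∏_{i ∈ S} x i` into an
integer combination of the Walsh characters `w_T x = ∏_{i ∈ T} (-1) ^ x i`. As
`Δ_h w_T = (w_T h - 1) w_T` and `w_T h = ±1`, a difference of such a combination is twice
another one, so its `(d+1)`-fold differences are divisible by `2 ^ (d+1)`. The hypothesis on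
`λ_S` says exactly that `P - α` is such a combination divided by `2 ^ (d+1)`, so its
`(d+1)`-fold differences are integers, i.e. vanish in `ℝ/ℤ`; the constant `α` is killed by the
first difference.
-/

open fwdDiff fwdDiff_aux

section IteratedDifference

variable {G A B : Type*} [AddCommGroup G] [AddCommGroup A] [AddCommGroup B]

lemma foldr_discDeriv_eq_prod_map_fwdDiffₗ (l : List G) (P : G → AddCircle (1 : ℝ)) :
    l.foldr discDeriv P = (l.map (fwdDiffₗ G (AddCircle (1 : ℝ)))).prod P := by
  induction l with
  | nil => rfl
  | cons h l ih => rw [List.foldr_cons, ih]; rfl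

lemma prod_map_fwdDiffₗ_const {l : List G} (hl : l ≠ []) (a : A) :
    (l.map (fwdDiffₗ G A)).prod (fun _ => a) = 0 := by
  induction l with
  | nil => exact absurd rfl hl
  | cons h l ih =>
    rw [List.map_cons, List.prod_cons, Module.End.mul_apply]
    rcases eq_or_ne l [] with rfl | hl'
    · exact fwdDiff_const h a
    · rw [ih hl', map_zero]

lemma fwdDiff_compLeft (φ : A →+ B) (h : G) (F : G → A) :
    Δ_[h] (φ.compLeft G F) = φ.compLeft G (Δ_[h] F) := by
  ext x; simp [fwdDiff]

lemma prod_map_fwdDiffₗ_compLeft (φ : A →+ B) (l : List G) (F : G → A) :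
    (l.map (fwdDiffₗ G B)).prod (φ.compLeft G F) =
      φ.compLeft G ((l.map (fwdDiffₗ G A)).prod F) := by
  induction l with
  | nil => rfl
  | cons h l ih =>
    simp only [List.map_cons, List.prod_cons, Module.End.mul_apply, ih, coe_fwdDiffₗ,
      fwdDiff_compLeft]

end IteratedDifference

section Walsh

lemma neg_one_pow_val_add (a b : ZMod 2) :
    (-1 : ℤ) ^ (a + b).val = (-1) ^ a.val * (-1) ^ b.val := by
  rw [ZMod.val_add, ← neg_one_pow_eq_pow_mod_two, pow_add]

def walsh (T : Finset I) : AddChar (I → ZMod 2) ℤ where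
  toFun x := ∏ i ∈ T, (-1) ^ (x i).val
  map_zero_eq_one' := by simp
  map_add_eq_mul' x y := by simp only [Pi.add_apply, neg_one_pow_val_add, prod_mul_distrib]

lemma walsh_apply (T : Finset I) (x : I → ZMod 2) :
    walsh T x = ∏ i ∈ T, (-1) ^ (x i).val := rfl

lemma odd_walsh (T : Finset I) (x : I → ZMod 2) : Odd (walsh T x) :=
  prod_induction _ Odd (fun _ _ => Odd.mul) odd_one fun _ _ => odd_neg_one.pow

lemma fwdDiff_walsh (T : Finset I) (h : I → ZMod 2) :
    Δ_[h] (walsh T) = (walsh T h - 1) • ⇑(walsh T) := by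
  ext x; simpa using fwdDiff_addChar_eq (walsh T) x h 1

def walshSpan (I : Type*) : AddSubgroup ((I → ZMod 2) → ℤ) :=
  AddSubgroup.closure (Set.range fun T => ⇑(walsh T))

lemma walsh_mem_walshSpan (T : Finset I) : ⇑(walsh T) ∈ walshSpan I :=
  AddSubgroup.subset_closure ⟨T, rfl⟩

lemma exists_fwdDiff_eq_two_smul (h : I → ZMod 2) {F : (I → ZMod 2) → ℤ}
    (hF : F ∈ walshSpan I) : ∃ F' ∈ walshSpan I, Δ_[h] F = 2 • F' := by
  induction hF using AddSubgroup.closure_induction with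
  | mem F hF =>
    obtain ⟨T, rfl⟩ := hF
    obtain ⟨k, hk⟩ := ((odd_walsh T h).sub_odd odd_one).two_dvd
    refine ⟨k • ⇑(walsh T), AddSubgroup.zsmul_mem _ (walsh_mem_walshSpan T) k, ?_⟩
    rw [fwdDiff_walsh, hk, mul_smul, two_zsmul, two_nsmul]
  | zero => exact ⟨0, zero_mem _, by rw [← coe_fwdDiffₗ, map_zero, smul_zero]⟩
  | add F₁ F₂ _ _ h₁ h₂ =>
    obtain ⟨F₁', hF₁', e₁⟩ := h₁
    obtain ⟨F₂', hF₂', e₂⟩ := h₂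
    exact ⟨F₁' + F₂', add_mem hF₁' hF₂', by rw [fwdDiff_add, e₁, e₂, smul_add]⟩
  | neg F _ hF =>
    obtain ⟨F', hF', e⟩ := hF
    exact ⟨-F', neg_mem hF', by rw [← coe_fwdDiffₗ, map_neg, coe_fwdDiffₗ, e, smul_neg]⟩

lemma exists_prod_map_fwdDiffₗ_eq_two_pow_smul (l : List (I → ZMod 2))
    {F : (I → ZMod 2) → ℤ} (hF : F ∈ walshSpan I) :
    ∃ F' ∈ walshSpan I, (l.map (fwdDiffₗ _ ℤ)).prod F = 2 ^ l.length • F' := by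
  induction l with
  | nil => exact ⟨F, hF, by simp⟩
  | cons h l ih =>
    obtain ⟨F', hF', e⟩ := ih
    obtain ⟨F'', hF'', e'⟩ := exists_fwdDiff_eq_two_smul h hF'
    refine ⟨F'', hF'', ?_⟩
    rw [List.map_cons, List.prod_cons, Module.End.mul_apply, e, map_nsmul,
      coe_fwdDiffₗ, e', smul_smul, List.length_cons, pow_succ]

lemma prod_map_fwdDiffₗ_zsmul_eq_zero {M : Type*} [AddCommGroup M] (l : List (I → ZMod 2))
    {ξ : M} (hξ : 2 ^ l.length • ξ = 0) {F : (I → ZMod 2) → ℤ} (hF : F ∈ walshSpan I) :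
    (l.map (fwdDiffₗ _ M)).prod (fun x => F x • ξ) = 0 := by
  obtain ⟨F', -, e⟩ := exists_prod_map_fwdDiffₗ_eq_two_pow_smul l hF
  change (l.map (fwdDiffₗ _ M)).prod ((zmultiplesHom M ξ).compLeft _ F) = 0
  ext x
  rw [prod_map_fwdDiffₗ_compLeft, e, AddMonoidHom.compLeft_apply, Function.comp_apply,
    Pi.smul_apply, zmultiplesHom_apply, smul_assoc, smul_comm, hξ, zsmul_zero, Pi.zero_apply]

lemma two_pow_card_mul_prod_val_mem_walshSpan (S : Finset I) :
    (fun x => 2 ^ S.card * ∏ i ∈ S, ((x i).val : ℤ)) ∈ walshSpan I := by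
  classical
  have two_mul_val (a : ZMod 2) : 2 * (a.val : ℤ) = 1 - (-1) ^ a.val := by fin_cases a <;> rfl
  have expand : (fun x => 2 ^ S.card * ∏ i ∈ S, ((x i).val : ℤ)) =
      ∑ T ∈ S.powerset, (-1) ^ T.card • ⇑(walsh T) := by
    ext x
    rw [← prod_const, ← prod_mul_distrib]
    simp only [two_mul_val, prod_sub, prod_const_one, mul_one, Finset.sum_apply, Pi.smul_apply,
      smul_eq_mul, walsh_apply]
  rw [expand]
  exact sum_mem fun T _ => AddSubgroup.zsmul_mem _ (walsh_mem_walshSpan T) _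

lemma mul_prod_val_mem_map_walshSpan {d : ℕ} {S : Finset I} (hS : S.card ≤ d) (j : ℤ) :
    (fun x => (j : ℝ) / 2 ^ (d - S.card + 1) * ∏ i ∈ S, ((x i).val : ℝ)) ∈
      (walshSpan I).map ((zmultiplesHom ℝ ((2 : ℝ) ^ (d + 1))⁻¹).compLeft _) := by
  refine ⟨j • fun x => 2 ^ S.card * ∏ i ∈ S, ((x i).val : ℤ),
    AddSubgroup.zsmul_mem _ (two_pow_card_mul_prod_val_mem_walshSpan S) j, ?_⟩
  have hpow : (2 : ℝ) ^ (d + 1) = 2 ^ (d - S.card + 1) * 2 ^ S.card := by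
    rw [← pow_add]; congr 1; omega
  ext x
  simp only [AddMonoidHom.compLeft_apply, Function.comp_apply, Pi.smul_apply,
    zmultiplesHom_apply, smul_eq_mul, hpow]
  rw [zsmul_eq_mul]
  push_cast
  field_simp

end Walsh

theorem stmt10_general [Fintype I] (d : ℕ)
    (P : (I → ZMod 2) → AddCircle (1 : ℝ))
    (α : AddCircle (1 : ℝ)) (lam : Finset I → ℝ)
    (hlam : ∀ S : Finset I, S.Nonempty → S.card ≤ d →
      ∃ j : ℤ, lam S = (j : ℝ) / 2 ^ (d - S.card + 1))
    (hP : ∀ x, P x = α + ((∑ S ∈ Finset.univ.powerset.filter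
        (fun S : Finset I => S.Nonempty ∧ S.card ≤ d),
        lam S * ∏ i ∈ S, ((x i).val : ℝ) : ℝ) : AddCircle (1 : ℝ))) :
    ∀ (h : Fin (d + 1) → (I → ZMod 2)) (x : I → ZMod 2),
      (List.ofFn h).foldr discDeriv P x = 0 := by
  obtain ⟨F, hF, hFP⟩ : (fun x => ∑ S ∈ Finset.univ.powerset.filter
      (fun S : Finset I => S.Nonempty ∧ S.card ≤ d), lam S * ∏ i ∈ S, ((x i).val : ℝ)) ∈
      (walshSpan I).map ((zmultiplesHom ℝ ((2 : ℝ) ^ (d + 1))⁻¹).compLeft _) := by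
    rw [← Finset.sum_fn]
    refine sum_mem fun S hS => ?_
    obtain ⟨hne, hcard⟩ := (mem_filter.1 hS).2
    obtain ⟨j, hj⟩ := hlam S hne hcard
    simpa only [hj] using mul_prod_val_mem_map_walshSpan hcard j
  set ξ : AddCircle (1 : ℝ) := ((((2 : ℝ) ^ (d + 1))⁻¹ : ℝ) : AddCircle (1 : ℝ))
  have hP' : P = (fun _ => α) + fun x => F x • ξ := by
    ext x
    rw [hP, ← congrFun hFP x, AddMonoidHom.compLeft_apply, Function.comp_apply,
      zmultiplesHom_apply, AddCircle.coe_zsmul, Pi.add_apply]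
  have hξ : 2 ^ (d + 1) • ξ = 0 := by
    rw [← AddCircle.coe_nsmul, nsmul_eq_mul, Nat.cast_pow, Nat.cast_ofNat,
      mul_inv_cancel₀ (by positivity), AddCircle.coe_period]
  intro h x
  rw [foldr_discDeriv_eq_prod_map_fwdDiffₗ, hP', map_add, prod_map_fwdDiffₗ_const (by simp),
    prod_map_fwdDiffₗ_zsmul_eq_zero _ (by rwa [List.length_ofFn]) hF, zero_add, Pi.zero_apply]

/-- If `P : F_2^I → ℝ/ℤ` has the Tao–Ziegler polynomial form of degree at most `d`, then all
its `(d+1)`-fold discrete derivatives vanish. -/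
theorem stmt10 [Fintype I] [DecidableEq I] [Nonempty I] (d : ℕ)
    (P : (I → ZMod 2) → AddCircle (1 : ℝ))
    (α : AddCircle (1 : ℝ)) (lam : Finset I → ℝ)
    (hlam : ∀ S : Finset I, S.Nonempty → S.card ≤ d →
      ∃ j : ℤ, lam S = (j : ℝ) / 2 ^ (d - S.card + 1))
    (hP : ∀ x, P x = α + ((∑ S ∈ Finset.univ.powerset.filter
        (fun S : Finset I => S.Nonempty ∧ S.card ≤ d),
        lam S * ∏ i ∈ S, ((x i).val : ℝ) : ℝ) : AddCircle (1 : ℝ))) :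
    ∀ (h : Fin (d + 1) → (I → ZMod 2)) (x : I → ZMod 2),
      (List.ofFn h).foldr discDeriv P x = 0 :=
  stmt10_general d P α lam hlam hP
end

section
/- Let 0 < ε ≤ 1 and let ℓ, m be positive integers with ℓ ≥ 2^{m+1}/ε². Let I be a nonempty finite set, P the uniform probability measure on {0,1}^I, and D_1, …, D_ℓ pairwise disjoint nonempty subsets of I each with at most m elements. Then for any A ⊆ {0,1}^I there exists i_0 ∈ [ℓ] such that for every x ∈ {0,1}^{D_{i_0}}, setting S_x = {y ∪ x : y ∈ {0,1}^{I∖D_{i_0}}}, we have |P[A | S_x] − P[A]| ≤ ε. -/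
/-!
Expand `A` in the Walsh basis, `c(S) = ∑_{y ∈ A} χ_S(y)`. Averaging over the cylinder that
fixes the coordinates in `D` kills every `χ_S` with `S ⊄ D`, so the variance over `x` of the
conditional density of `A` on the cylinder through `x` is `2^{-2n} ∑_{∅ ≠ S ⊆ D} c(S)²`. For
pairwise disjoint `D_i` these sets of characters are disjoint, so by Parseval the `ℓ` variances
add up to at most the density of `A`, and one of them is at most `1/ℓ`. A single cylinder has
measure `2^{-|D|}`, so on it the squared deviation is at most `2^{|D|}/ℓ ≤ 2^m/ℓ ≤ ε²/2`.
-/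

open Finset

noncomputable section

namespace BooleanCube

section Walsh

variable {I : Type*}

def sign (a : ZMod 2) : ℝ := (-1) ^ a.val

lemma sign_add (a b : ZMod 2) : sign (a + b) = sign a * sign b := by
  fin_cases a <;> fin_cases b <;> simp +decide [sign]

lemma one_add_sign (a : ZMod 2) : 1 + sign a = if a = 0 then 2 else 0 := by
  obtain rfl | rfl : a = 0 ∨ a = 1 := by revert a; decide
  all_goals norm_num [sign, ZMod.val_one]

def walsh (S : Finset I) (y : I → ZMod 2) : ℝ := ∏ j ∈ S, sign (y j)

lemma walsh_add (S : Finset I) (y z : I → ZMod 2) : walsh S (y + z) = walsh S y * walsh S z := by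
  simp only [walsh, Pi.add_apply, sign_add, prod_mul_distrib]

lemma sum_powerset_walsh (D : Finset I) (z : I → ZMod 2) :
    ∑ S ∈ D.powerset, walsh S z = if ∀ j ∈ D, z j = 0 then 2 ^ #D else 0 := by
  simp only [walsh, ← prod_one_add, one_add_sign, prod_ite_zero, prod_const]

def fourierCoeff (A : Finset (I → ZMod 2)) (S : Finset I) : ℝ := ∑ y ∈ A, walsh S y

lemma fourierCoeff_empty (A : Finset (I → ZMod 2)) : fourierCoeff A ∅ = #A := by
  simp [fourierCoeff, walsh]

end Walsh

variable {I : Type*} [Fintype I] [DecidableEq I]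

def cylinder (D : Finset I) (x : I → ZMod 2) : Finset (I → ZMod 2) :=
  univ.filter fun y => ∀ j ∈ D, y j = x j

lemma mem_cylinder_comm {D : Finset I} {x y : I → ZMod 2} :
    y ∈ cylinder D x ↔ x ∈ cylinder D y := by
  simp only [cylinder, mem_filter, mem_univ, true_and]
  exact forall₂_congr fun _ _ => eq_comm

lemma cylinder_eq_of_mem {D : Finset I} {x y : I → ZMod 2} (h : y ∈ cylinder D x) :
    cylinder D y = cylinder D x := by
  simp only [cylinder, mem_filter, mem_univ, true_and] at h
  exact filter_congr fun z _ => forall₂_congr fun j hj => by rw [h j hj]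

lemma card_cylinder (D : Finset I) (x : I → ZMod 2) : #(cylinder D x) = 2 ^ #Dᶜ := by
  have e : {y // y ∈ cylinder D x} ≃ ((Dᶜ : Finset I) → ZMod 2) :=
    { toFun := fun y j => y.1 j
      invFun := fun g => ⟨fun j => if h : j ∈ D then x j else g ⟨j, by simpa⟩,
        by simp +contextual [cylinder]⟩
      left_inv := fun y => by
        ext j
        by_cases h : j ∈ D
        · simp [h, (mem_filter.mp y.2).2 j h]
        · simp [h]
      right_inv := fun g => by
        ext j
        simp [mem_compl.mp j.2] }
  rw [← Fintype.card_coe, Fintype.card_congr e, Fintype.card_fun, Fintype.card_coe, ZMod.card]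

lemma sum_sum_inter_cylinder {M : Type*} [AddCommMonoid M] (A : Finset (I → ZMod 2))
    (D : Finset I) (f : (I → ZMod 2) → M) :
    ∑ x, ∑ y ∈ A ∩ cylinder D x, f y = 2 ^ #Dᶜ • ∑ y ∈ A, f y := by
  rw [sum_comm' (t' := A) (s' := cylinder D)]
  · simp_rw [sum_const, card_cylinder, smul_sum]
  · intro x y
    simp [mem_cylinder_comm (x := x), and_comm]

lemma sum_card_inter_cylinder (A : Finset (I → ZMod 2)) (D : Finset I) :
    ∑ x, #(A ∩ cylinder D x) = 2 ^ #Dᶜ * #A := by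
  have h := sum_sum_inter_cylinder A D fun _ => 1
  simpa only [sum_const, smul_eq_mul, mul_one] using h

lemma sum_card_inter_cylinder_sq (A : Finset (I → ZMod 2)) (D : Finset I) :
    ∑ x, #(A ∩ cylinder D x) ^ 2 = 2 ^ #Dᶜ * ∑ y ∈ A, #(A ∩ cylinder D y) := by
  have h : ∀ x, #(A ∩ cylinder D x) ^ 2 = ∑ y ∈ A ∩ cylinder D x, #(A ∩ cylinder D y) := by
    intro x
    rw [sq, ← smul_eq_mul, ← sum_const]
    refine sum_congr rfl fun y hy => ?_
    rw [cylinder_eq_of_mem (mem_inter.mp hy).2]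
  simp_rw [h]
  exact sum_sum_inter_cylinder A D _

lemma sum_powerset_fourierCoeff_sq (A : Finset (I → ZMod 2)) (D : Finset I) :
    ∑ S ∈ D.powerset, fourierCoeff A S ^ 2 = 2 ^ #D * ∑ y ∈ A, (#(A ∩ cylinder D y) : ℝ) := by
  have hsq : ∀ S, fourierCoeff A S ^ 2 = ∑ y ∈ A, ∑ z ∈ A, walsh S (y + z) := by
    intro S
    simp only [fourierCoeff, sq, sum_mul_sum, walsh_add]
  have hcard : ∀ y, (#(A ∩ cylinder D y) : ℝ) =
      ∑ z ∈ A, if ∀ j ∈ D, (y + z) j = 0 then 1 else 0 := by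
    intro y
    simp [cylinder, CharTwo.add_eq_zero, eq_comm, inter_filter]
  simp_rw [hsq, hcard, mul_sum]
  rw [sum_comm]
  refine sum_congr rfl fun y _ => ?_
  rw [sum_comm]
  refine sum_congr rfl fun z _ => ?_
  rw [sum_powerset_walsh]
  split_ifs <;> simp

lemma sum_fourierCoeff_sq (A : Finset (I → ZMod 2)) :
    ∑ S, fourierCoeff A S ^ 2 = 2 ^ Fintype.card I * #A := by
  have h : ∀ y ∈ A, (#(A ∩ cylinder univ y) : ℝ) = 1 := fun y hy => by
    simp [cylinder, ← funext_iff, filter_eq', hy]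
  rw [← powerset_univ, sum_powerset_fourierCoeff_sq, sum_congr rfl h]
  simp

def condDensity (A : Finset (I → ZMod 2)) (D : Finset I) (x : I → ZMod 2) : ℝ :=
  #(A ∩ cylinder D x) / #(cylinder D x)

def density (A : Finset (I → ZMod 2)) : ℝ := #A / 2 ^ Fintype.card I

lemma sum_sq_condDensity_sub_density (A : Finset (I → ZMod 2)) (D : Finset I) :
    ∑ x, (condDensity A D x - density A) ^ 2 =
      (∑ S ∈ D.powerset.erase ∅, fourierCoeff A S ^ 2) / 2 ^ Fintype.card I := by
  set K : ℝ := 2 ^ #Dᶜ with hK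
  set q : (I → ZMod 2) → ℝ := fun x => #(A ∩ cylinder D x) with hq_def
  set R := ∑ y ∈ A, q y
  have hN : (2 : ℝ) ^ Fintype.card I = 2 ^ #D * K := by
    rw [hK, ← pow_add, card_add_card_compl]
  have hq : ∑ x, q x = K * #A := by
    simp only [hq_def, hK]
    exact_mod_cast sum_card_inter_cylinder A D
  have hq2 : ∑ x, q x ^ 2 = K * R := by
    simp only [hq_def, hK, R]
    exact_mod_cast sum_card_inter_cylinder_sq A D
  have hW : ∑ S ∈ D.powerset.erase ∅, fourierCoeff A S ^ 2 = 2 ^ #D * R - #A ^ 2 := by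
    rw [← sum_powerset_fourierCoeff_sq, ← add_sum_erase _ _ (empty_mem_powerset D),
      fourierCoeff_empty, add_sub_cancel_left]
  have hexpand : ∀ x, (condDensity A D x - density A) ^ 2 =
      q x ^ 2 / K ^ 2 - 2 * #A / (2 ^ Fintype.card I * K) * q x +
        #A ^ 2 / (2 ^ Fintype.card I) ^ 2 := fun x => by
    simp only [condDensity, density, card_cylinder]
    push_cast
    ring
  simp_rw [hexpand, sum_add_distrib, sum_sub_distrib, ← sum_div, ← mul_sum, hq, hq2, sum_const,
    card_univ, Fintype.card_fun, ZMod.card, hW]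
  rw [nsmul_eq_mul, Nat.cast_pow, Nat.cast_ofNat, hN]
  have : K ≠ 0 := by positivity
  field_simp
  ring

open Function in
lemma sum_sum_sq_condDensity_sub_density_le {ι : Type*} [Fintype ι]
    (A : Finset (I → ZMod 2)) (D : ι → Finset I) (hD : Pairwise (Disjoint on D)) :
    ∑ i, ∑ x, (condDensity A (D i) x - density A) ^ 2 ≤ #A := by
  have hdisj : ((univ : Finset ι) : Set ι).PairwiseDisjoint fun i => (D i).powerset.erase ∅ := by
    intro i _ j _ hij
    refine disjoint_left.mpr fun S hSi hSj => ?_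
    obtain ⟨hS, hSDi⟩ := mem_erase.mp hSi
    obtain ⟨a, ha⟩ := nonempty_iff_ne_empty.mpr hS
    exact disjoint_left.mp (hD hij) (mem_powerset.mp hSDi ha)
      (mem_powerset.mp (mem_erase.mp hSj).2 ha)
  simp_rw [sum_sq_condDensity_sub_density, ← sum_div, ← sum_biUnion hdisj]
  rw [div_le_iff₀ (by positivity), mul_comm, ← sum_fourierCoeff_sq]
  exact sum_le_univ_sum_of_nonneg fun _ => sq_nonneg _

lemma card_cylinder_mul_sq_le (A : Finset (I → ZMod 2)) (D : Finset I) (x : I → ZMod 2) :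
    #(cylinder D x) * (condDensity A D x - density A) ^ 2 ≤
      ∑ x', (condDensity A D x' - density A) ^ 2 := by
  calc #(cylinder D x) * (condDensity A D x - density A) ^ 2
      = ∑ x' ∈ cylinder D x, (condDensity A D x' - density A) ^ 2 := by
        rw [sum_congr rfl fun x' hx' => by rw [condDensity, cylinder_eq_of_mem hx'], sum_const,
          nsmul_eq_mul, condDensity]
    _ ≤ ∑ x', (condDensity A D x' - density A) ^ 2 :=
        sum_le_univ_sum_of_nonneg fun _ => sq_nonneg _

lemma sq_condDensity_sub_density_le (A : Finset (I → ZMod 2)) (D : Finset I) {c : ℝ}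
    (h : ∑ x, (condDensity A D x - density A) ^ 2 ≤ 2 ^ Fintype.card I * c) (x : I → ZMod 2) :
    (condDensity A D x - density A) ^ 2 ≤ 2 ^ #D * c := by
  have hle := (card_cylinder_mul_sq_le A D x).trans h
  rw [card_cylinder, ← card_add_card_compl D, pow_add, Nat.cast_pow, Nat.cast_ofNat,
    mul_comm (2 ^ #D : ℝ), mul_assoc] at hle
  exact le_of_mul_le_mul_left hle (by positivity)

end BooleanCube

end

open BooleanCube

theorem stmt14_general {I : Type*} [Fintype I] [DecidableEq I]
    (ε : ℝ) (hε0 : 0 < ε) (ℓ m : ℕ) (hℓ : 0 < ℓ)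
    (hlm : (2 : ℝ) ^ (m + 1) / ε ^ 2 ≤ (ℓ : ℝ))
    (D : Fin ℓ → Finset I)
    (hDm : ∀ i, (D i).card ≤ m)
    (hdisj : ∀ i j, i ≠ j → Disjoint (D i) (D j))
    (A : Finset (I → ZMod 2)) :
    ∃ i₀ : Fin ℓ, ∀ x : I → ZMod 2,
      let S := Finset.univ.filter fun y : I → ZMod 2 => ∀ j ∈ D i₀, y j = x j
      |((A ∩ S).card : ℝ) / (S.card : ℝ)
        - (A.card : ℝ) / (2 : ℝ) ^ (Fintype.card I)| ≤ ε := by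
  have hℓ' : (0 : ℝ) < ℓ := by exact_mod_cast hℓ
  have hsum : ∑ i, ∑ x, (condDensity A (D i) x - density A) ^ 2 ≤
      ∑ _i : Fin ℓ, 2 ^ Fintype.card I * (ℓ : ℝ)⁻¹ := by
    calc _ ≤ (#A : ℝ) := sum_sum_sq_condDensity_sub_density_le A D fun i j => hdisj i j
      _ ≤ 2 ^ Fintype.card I := by exact_mod_cast card_le_univ A |>.trans_eq (by simp)
      _ = _ := by simp [field]
  obtain ⟨i₀, -, hi₀⟩ := exists_le_of_sum_le (univ_nonempty_iff.mpr ⟨⟨0, hℓ⟩⟩) hsum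
  refine ⟨i₀, fun x => abs_le_of_sq_le_sq ?_ hε0.le⟩
  calc (condDensity A (D i₀) x - density A) ^ 2
      ≤ 2 ^ #(D i₀) * (ℓ : ℝ)⁻¹ := sq_condDensity_sub_density_le A (D i₀) hi₀ x
    _ ≤ 2 ^ (m + 1) * (ℓ : ℝ)⁻¹ := by gcongr; exacts [one_le_two, (hDm i₀).trans m.le_succ]
    _ ≤ ε ^ 2 := by
        rw [div_le_iff₀ (by positivity)] at hlm
        rw [← div_eq_mul_inv, div_le_iff₀ hℓ']
        linarith

/-- Conditional concentration lemma: if `ℓ ≥ 2^{m+1}/ε²` and `D_1, …, D_ℓ` are pairwise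
disjoint nonempty subsets of `I` of size at most `m`, then for any `A ⊆ {0,1}^I` there is an
index `i₀` such that conditioning on any fixed values on `D_{i₀}` changes the density of `A`
by at most `ε`. -/
theorem stmt14 {I : Type*} [Fintype I] [DecidableEq I] [Nonempty I]
    (ε : ℝ) (hε0 : 0 < ε) (hε1 : ε ≤ 1) (ℓ m : ℕ) (hℓ : 0 < ℓ) (hm : 0 < m)
    (hlm : (2 : ℝ) ^ (m + 1) / ε ^ 2 ≤ (ℓ : ℝ))
    (D : Fin ℓ → Finset I)
    (hne : ∀ i, (D i).Nonempty) (hDm : ∀ i, (D i).card ≤ m)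
    (hdisj : ∀ i j, i ≠ j → Disjoint (D i) (D j))
    (A : Finset (I → ZMod 2)) :
    ∃ i₀ : Fin ℓ, ∀ x : I → ZMod 2,
      let S := Finset.univ.filter fun y : I → ZMod 2 => ∀ j ∈ D i₀, y j = x j
      |((A ∩ S).card : ℝ) / (S.card : ℝ)
        - (A.card : ℝ) / (2 : ℝ) ^ (Fintype.card I)| ≤ ε :=
  stmt14_general ε hε0 ℓ m hℓ hlm D hDm hdisj A
end
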